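/- arXiv:2409.06148 — 2 statements merged into one kernel-verified Lean document; each statement's English description precedes it below -/
import Mathlib

section
/- For the no-boundary PSP index, same-partition queries require concatenation but remain correct: for s, t in the same partition G_i, d_G(s,t) = min( d_{G'_i}(s,t) computed with only intra-partition shortest paths replaced by d_{L_i}(s,t), min over boundary pairs b_p, b_q ∈ B_i of d_{L_i}(s,b_p) + d_{L̃}(b_p,b_q) + d_{L_i}(b_q,t) ), where d_{L_i} gives shortest distances within the subgraph G_i alone and d_{L̃} gives global shortest distances between boundary vertices. -/
open scoped ENNReal

/-- Cost of the walk `s :: p ++ [t]`: `p` is the list of intermediate vertices, a missing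
edge has weight `⊤`. -/
noncomputable def pathCost {V : Type*} (w : V → V → ℝ≥0∞) : V → List V → V → ℝ≥0∞
  | s, [], t => w s t
  | s, x :: xs, t => w s x + pathCost w x xs t

/-- Shortest-path distance induced by the weight function `w`. -/
noncomputable def gdist {V : Type*} [DecidableEq V] (w : V → V → ℝ≥0∞) (s t : V) : ℝ≥0∞ :=
  if s = t then 0 else ⨅ p : List V, pathCost w s p t

/-- Restriction of the weights to a single partition `i` (edges leaving the partition are
removed). -/
noncomputable def restrictW {V : Type*} {k : ℕ} (part : V → Fin k) (i : Fin k)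
    (w : V → V → ℝ≥0∞) : V → V → ℝ≥0∞ :=
  fun u v => if part u = i ∧ part v = i then w u v else ⊤

/-!
The global distance is at most the right-hand side by the triangle inequality. Conversely, the
right-hand side, extended outside `G_i` by the cheapest way to enter `G_i` at a boundary vertex
and then finish inside `G_i`, is a potential: it vanishes at `t` and drops by at most `w u x`
along every edge `u → x`, because an edge between `G_i` and its outside joins two boundary
vertices. Summing along a walk bounds the potential at `s` by the cost of the walk.
-/

section gdist

variable {V : Type*} (w : V → V → ℝ≥0∞)

variable {w} in
lemma le_pathCost_add {f : V → ℝ≥0∞} (hf : ∀ u x, f u ≤ w u x + f x) (t : V) :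
    ∀ (p : List V) (s : V), f s ≤ pathCost w s p t + f t
  | [], s => hf s t
  | x :: xs, s => calc
      f s ≤ w s x + f x := hf s x
      _ ≤ w s x + (pathCost w x xs t + f t) := by gcongr; exact le_pathCost_add hf t xs x
      _ = pathCost w s (x :: xs) t + f t := (add_assoc _ _ _).symm

variable [DecidableEq V]

@[simp]
lemma gdist_self (s : V) : gdist w s s = 0 := if_pos rfl

lemma gdist_mono {w w' : V → V → ℝ≥0∞} (h : ∀ u v, w u v ≤ w' u v) (s t : V) :
    gdist w s t ≤ gdist w' s t := by
  have hcost : ∀ (p : List V) (s : V), pathCost w s p t ≤ pathCost w' s p t := by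
    intro p
    induction p with
    | nil => exact fun s => h s t
    | cons x xs ih => exact fun s => add_le_add (h s x) (ih x)
  unfold gdist
  split
  · exact le_rfl
  · exact iInf_mono fun p => hcost p s

lemma gdist_le_weight_add_gdist (s x t : V) : gdist w s t ≤ w s x + gdist w x t := by
  by_cases hst : s = t
  · simp [hst]
  by_cases hxt : x = t
  · subst hxt
    rw [gdist_self, add_zero, gdist, if_neg hst]
    exact iInf_le (fun p => pathCost w s p x) []
  rw [gdist, if_neg hst, gdist, if_neg hxt, ENNReal.add_iInf]
  exact le_iInf fun p => iInf_le (fun p => pathCost w s p t) (x :: p)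

lemma gdist_le_weight (s t : V) : gdist w s t ≤ w s t := by
  simpa using gdist_le_weight_add_gdist w s t t

variable {w} in
lemma le_gdist_add {f : V → ℝ≥0∞} (hf : ∀ u x, f u ≤ w u x + f x) (s t : V) :
    f s ≤ gdist w s t + f t := by
  by_cases hst : s = t
  · simp [hst]
  rw [gdist, if_neg hst, ENNReal.iInf_add]
  exact le_iInf fun p => le_pathCost_add hf t p s

lemma gdist_triangle (a b c : V) : gdist w a c ≤ gdist w a b + gdist w b c :=
  le_gdist_add (f := fun u => gdist w u c) (fun u x => gdist_le_weight_add_gdist w u x c) a b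

end gdist

section restrictW

variable {V : Type*} {k : ℕ} {part : V → Fin k} {i : Fin k} {w : V → V → ℝ≥0∞}

lemma restrictW_of_mem {u v : V} (hu : part u = i) (hv : part v = i) :
    restrictW part i w u v = w u v := if_pos ⟨hu, hv⟩

lemma le_restrictW (u v : V) : w u v ≤ restrictW part i w u v := by
  unfold restrictW
  split
  · exact le_rfl
  · exact le_top

end restrictW

section query

variable {V : Type*} [DecidableEq V] {k : ℕ} (part : V → Fin k) (i : Fin k) (B : Finset V)
  (w : V → V → ℝ≥0∞)

noncomputable def entryDist (u t : V) : ℝ≥0∞ :=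
  ⨅ bq ∈ B.filter (fun b => part b = i), gdist w u bq + gdist (restrictW part i w) bq t

noncomputable def queryDist (s t : V) : ℝ≥0∞ :=
  min (gdist (restrictW part i w) s t)
    (⨅ bp ∈ B.filter (fun b => part b = i), ⨅ bq ∈ B.filter (fun b => part b = i),
      gdist (restrictW part i w) s bp + gdist w bp bq + gdist (restrictW part i w) bq t)

noncomputable def queryPotential (t u : V) : ℝ≥0∞ :=
  if part u = i then queryDist part i B w u t else entryDist part i B w u t

variable {part i B w}

lemma entryDist_le_weight_add (u x t : V) :
    entryDist part i B w u t ≤ w u x + entryDist part i B w x t := calc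
  _ ≤ ⨅ bq ∈ B.filter (fun b => part b = i),
        w u x + (gdist w x bq + gdist (restrictW part i w) bq t) :=
      iInf₂_mono fun bq _ => by
        rw [← add_assoc]
        gcongr
        exact gdist_le_weight_add_gdist w u x bq
  _ = w u x + entryDist part i B w x t := by simp only [entryDist, ENNReal.add_iInf]

lemma queryDist_le_restrictW_add (u x t : V) :
    queryDist part i B w u t ≤ restrictW part i w u x + queryDist part i B w x t := by
  rw [queryDist, queryDist, ← min_add_add_left]
  refine min_le_min (gdist_le_weight_add_gdist _ u x t) ?_
  simp only [ENNReal.add_iInf]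
  refine iInf₂_mono fun bp _ => iInf₂_mono fun bq _ => ?_
  rw [← add_assoc, ← add_assoc]
  gcongr
  exact gdist_le_weight_add_gdist _ u x bp

lemma queryDist_le_entryDist {u : V} (hu : u ∈ B.filter (fun b => part b = i)) (t : V) :
    queryDist part i B w u t ≤ entryDist part i B w u t :=
  (min_le_right _ _).trans <| le_iInf₂ fun bq hbq =>
    (iInf₂_le u hu).trans <| (iInf₂_le bq hbq).trans_eq <| by rw [gdist_self, zero_add]

lemma entryDist_le_gdist_add_queryDist {x : V} (hx : x ∈ B.filter (fun b => part b = i))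
    (u t : V) :
    entryDist part i B w u t ≤ gdist w u x + queryDist part i B w x t := by
  rw [queryDist, ← min_add_add_left]
  refine le_min (iInf₂_le x hx) ?_
  simp only [ENNReal.add_iInf]
  refine le_iInf₂ fun bp _ => le_iInf₂ fun bq hbq => (iInf₂_le bq hbq).trans ?_
  calc gdist w u bq + gdist (restrictW part i w) bq t
      ≤ gdist w u x + gdist w x bp + gdist w bp bq + gdist (restrictW part i w) bq t := by
        gcongr
        exact (gdist_triangle w u bp bq).trans (by gcongr; exact gdist_triangle w u x bp)
    _ ≤ _ := by
        rw [← add_assoc, ← add_assoc]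
        gcongr
        exact gdist_mono le_restrictW x bp

lemma queryPotential_le_weight_add
    (hbd : ∀ u v, part u ≠ part v → w u v ≠ ⊤ → u ∈ B ∧ v ∈ B) (t u x : V) :
    queryPotential part i B w t u ≤ w u x + queryPotential part i B w t x := by
  by_cases hw : w u x = ⊤
  · simp [hw]
  unfold queryPotential
  split_ifs with hu hx hx
  · exact (queryDist_le_restrictW_add u x t).trans_eq (by rw [restrictW_of_mem hu hx])
  · have hbu : u ∈ B.filter (fun b => part b = i) :=
      Finset.mem_filter.2 ⟨(hbd u x (fun h => hx (h ▸ hu)) hw).1, hu⟩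
    exact (queryDist_le_entryDist hbu t).trans (entryDist_le_weight_add u x t)
  · have hbx : x ∈ B.filter (fun b => part b = i) :=
      Finset.mem_filter.2 ⟨(hbd u x (fun h => hu (h ▸ hx)) hw).2, hx⟩
    exact (entryDist_le_gdist_add_queryDist hbx u t).trans (by gcongr; exact gdist_le_weight w u x)
  · exact entryDist_le_weight_add u x t

lemma queryDist_le_gdist (hbd : ∀ u v, part u ≠ part v → w u v ≠ ⊤ → u ∈ B ∧ v ∈ B)
    {s t : V} (hs : part s = i) (ht : part t = i) :
    queryDist part i B w s t ≤ gdist w s t := by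
  have hpot_t : queryPotential part i B w t t = 0 := by
    rw [queryPotential, if_pos ht]
    exact nonpos_iff_eq_zero.1 ((min_le_left _ _).trans_eq (gdist_self _ t))
  calc queryDist part i B w s t = queryPotential part i B w t s := by
        rw [queryPotential, if_pos hs]
    _ ≤ gdist w s t + queryPotential part i B w t t :=
        le_gdist_add (queryPotential_le_weight_add hbd t) s t
    _ = gdist w s t := by rw [hpot_t, add_zero]

lemma gdist_le_queryDist (s t : V) : gdist w s t ≤ queryDist part i B w s t :=
  le_min (gdist_mono le_restrictW s t) <| le_iInf₂ fun bp _ => le_iInf₂ fun bq _ => calc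
    gdist w s t ≤ gdist w s bp + gdist w bp bq + gdist w bq t :=
      (gdist_triangle w s bq t).trans (by gcongr; exact gdist_triangle w s bp bq)
    _ ≤ _ := by gcongr <;> exact gdist_mono le_restrictW _ _

end query

theorem no_boundary_same_partition_query_correct_general
    {V : Type*} [DecidableEq V] {k : ℕ}
    (part : V → Fin k) (B : Finset V) (w : V → V → ℝ≥0∞)
    -- every edge between different partitions joins two boundary vertices
    (hbd : ∀ u v, part u ≠ part v → w u v ≠ ⊤ → u ∈ B ∧ v ∈ B)
    (s t : V) (hst : part s = part t) :
    gdist w s t =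
      min (gdist (restrictW part (part s) w) s t)
        (⨅ bp ∈ (B.filter fun b => part b = part s),
          ⨅ bq ∈ (B.filter fun b => part b = part s),
            gdist (restrictW part (part s) w) s bp + gdist w bp bq
              + gdist (restrictW part (part s) w) bq t) :=
  le_antisymm (gdist_le_queryDist s t) (queryDist_le_gdist hbd rfl hst.symm)

/-- Correctness of the no-boundary same-partition query: for `s, t` in the same partition
`G_i`, the global distance equals the minimum of (a) the purely intra-partition distance
`d_{L_i}(s,t)` and (b) the best concatenation
`d_{L_i}(s,b_p) + d_{L̃}(b_p,b_q) + d_{L_i}(b_q,t)` over boundary pairs `b_p, b_q ∈ B_i`,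
where `d_{L_i}` is the distance within the subgraph `G_i` alone and `d_{L̃}` is the global
distance between boundary vertices. -/
theorem no_boundary_same_partition_query_correct
    {V : Type*} [Fintype V] [DecidableEq V] {k : ℕ}
    (part : V → Fin k) (B : Finset V) (w : V → V → ℝ≥0∞)
    (hsymm : ∀ u v, w u v = w v u)
    (hpos : ∀ u v, u ≠ v → 0 < w u v)
    -- every edge between different partitions joins two boundary vertices
    (hbd : ∀ u v, part u ≠ part v → w u v ≠ ⊤ → u ∈ B ∧ v ∈ B)
    (s t : V) (hst : part s = part t) :
    gdist w s t =
      min (gdist (restrictW part (part s) w) s t)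
        (⨅ bp ∈ (B.filter fun b => part b = part s),
          ⨅ bq ∈ (B.filter fun b => part b = part s),
            gdist (restrictW part (part s) w) s bp + gdist w bp bq
              + gdist (restrictW part (part s) w) bq t) :=
  no_boundary_same_partition_query_correct_general part B w hbd s t hst
end

section
/- For the cross-partition query formula of the pre/post-boundary PSP index: for s ∈ G_i, t ∈ G_j with i ≠ j, where s and t are both non-boundary, d_G(s,t) = min over b_p ∈ B_i and b_q ∈ B_j of ( d_G(s,b_p) + d_G(b_p,b_q) + d_G(b_q,t) ). -/
open scoped ENNReal

/-!
Cutting a walk from `s` to `t` at the last vertex `b` of its initial segment inside the part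
of `s` shows `d(s,t) = min_b (d(s,b) + d(b,t))` over the boundary vertices `b` of that part:
the edge leaving the part makes `b` a boundary vertex. Since `d` is symmetric, the same holds
with the boundary of the part of `t`, and applying both decompositions gives the formula.
-/

section PathCost

variable {V : Type*} (w : V → V → ℝ≥0∞)

theorem pathCost_append (p q : List V) (a x b : V) :
    pathCost w a (p ++ x :: q) b = pathCost w a p x + pathCost w x q b := by
  induction p generalizing a with
  | nil => simp [pathCost]
  | cons y ys ih => simp [pathCost, ih, add_assoc]

theorem pathCost_reverse (hsymm : ∀ u v, w u v = w v u) (p : List V) (a b : V) :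
    pathCost w a p b = pathCost w b p.reverse a := by
  induction p generalizing a with
  | nil => simp [pathCost, hsymm a b]
  | cons x xs ih =>
    rw [pathCost, ih x, List.reverse_cons, pathCost_append, pathCost, hsymm x a, add_comm]

end PathCost

namespace gdist

variable {V : Type*} [DecidableEq V] (w : V → V → ℝ≥0∞)

@[simp]
theorem self (a : V) : gdist w a a = 0 := by simp [gdist]

theorem of_ne {s t : V} (h : s ≠ t) : gdist w s t = ⨅ p : List V, pathCost w s p t :=
  if_neg h

theorem le_pathCost (s t : V) (p : List V) : gdist w s t ≤ pathCost w s p t := by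
  by_cases h : s = t
  · simp [h]
  · exact (of_ne w h).symm ▸ iInf_le _ p

theorem comm (hsymm : ∀ u v, w u v = w v u) (a b : V) : gdist w a b = gdist w b a := by
  suffices key : ∀ x y : V, gdist w x y ≤ gdist w y x from le_antisymm (key a b) (key b a)
  intro x y
  by_cases h : x = y
  · simp [h]
  · rw [of_ne w h, of_ne w (Ne.symm h)]
    exact le_iInf fun p => pathCost_reverse w hsymm p y x ▸ iInf_le _ p.reverse

theorem le_weight_add (a b c : V) : gdist w a c ≤ w a b + gdist w b c := by
  by_cases hbc : b = c
  · subst hbc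
    simpa [pathCost] using le_pathCost w a b []
  · rw [of_ne w hbc, ENNReal.add_iInf]
    exact le_iInf fun p => le_pathCost w a c (b :: p)

theorem le_pathCost_add (a b c : V) (p : List V) :
    gdist w a c ≤ pathCost w a p b + gdist w b c := by
  induction p generalizing a with
  | nil => exact le_weight_add w a b c
  | cons x xs ih =>
    calc gdist w a c ≤ w a x + gdist w x c := le_weight_add w a x c
      _ ≤ w a x + (pathCost w x xs b + gdist w b c) := by gcongr; exact ih x
      _ = pathCost w a (x :: xs) b + gdist w b c := by rw [pathCost, add_assoc]

theorem triangle (a b c : V) : gdist w a c ≤ gdist w a b + gdist w b c := by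
  by_cases hab : a = b
  · simp [hab]
  · rw [of_ne w hab, ENNReal.iInf_add]
    exact le_iInf fun p => le_pathCost_add w a b c p

end gdist

section Boundary

variable {V ι : Type*} [DecidableEq V] [DecidableEq ι] (w : V → V → ℝ≥0∞) (part : V → ι) (B : Finset V)

theorem exists_boundary_gdist_add_le_pathCost
    (hB : ∀ v u, part u ≠ part v → w v u ≠ ⊤ → v ∈ B) (t : V) :
    ∀ (p : List V) (s : V), part s ≠ part t → pathCost w s p t ≠ ⊤ →
      ∃ b ∈ B, part b = part s ∧ gdist w s b + gdist w b t ≤ pathCost w s p t := by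
  intro p
  induction p with
  | nil =>
    intro s hst hfin
    exact ⟨s, hB s t hst.symm hfin, rfl, by simpa using gdist.le_pathCost w s t []⟩
  | cons x xs ih =>
    intro s hst hfin
    rw [pathCost] at hfin ⊢
    obtain ⟨hwsx, hrest⟩ := ENNReal.add_ne_top.mp hfin
    by_cases hx : part x = part s
    · obtain ⟨b, hbB, hbs, hb⟩ := ih x (hx ▸ hst) hrest
      refine ⟨b, hbB, hbs.trans hx, ?_⟩
      calc gdist w s b + gdist w b t
          ≤ w s x + gdist w x b + gdist w b t := by gcongr; exact gdist.le_weight_add w s x b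
        _ = w s x + (gdist w x b + gdist w b t) := add_assoc _ _ _
        _ ≤ w s x + pathCost w x xs t := by gcongr
    · refine ⟨s, hB s x hx hwsx, rfl, ?_⟩
      simpa [pathCost] using gdist.le_pathCost w s t (x :: xs)

theorem gdist_eq_iInf_boundary_source
    (hB : ∀ v u, part u ≠ part v → w v u ≠ ⊤ → v ∈ B) {s t : V} (hst : part s ≠ part t) :
    gdist w s t = ⨅ b ∈ B.filter (fun b => part b = part s), gdist w s b + gdist w b t := by
  refine le_antisymm (le_iInf₂ fun b _ => gdist.triangle w s b t) ?_
  rw [gdist.of_ne w fun h => hst (congrArg part h)]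
  refine le_iInf fun p => ?_
  by_cases hfin : pathCost w s p t = ⊤
  · exact hfin ▸ le_top
  obtain ⟨b, hbB, hbs, hb⟩ := exists_boundary_gdist_add_le_pathCost w part B hB t p s hst hfin
  exact (iInf₂_le b (Finset.mem_filter.2 ⟨hbB, hbs⟩)).trans hb

theorem gdist_eq_iInf_boundary_target (hsymm : ∀ u v, w u v = w v u)
    (hB : ∀ v u, part u ≠ part v → w v u ≠ ⊤ → v ∈ B) {s t : V} (hst : part s ≠ part t) :
    gdist w s t = ⨅ b ∈ B.filter (fun b => part b = part t), gdist w s b + gdist w b t := by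
  rw [gdist.comm w hsymm, gdist_eq_iInf_boundary_source w part B hB hst.symm]
  refine iInf_congr fun b => iInf_congr fun _ => ?_
  rw [gdist.comm w hsymm t b, gdist.comm w hsymm b s, add_comm]

end Boundary

theorem cross_partition_query_correct_general
    {V : Type*} [DecidableEq V] {k : ℕ}
    (part : V → Fin k) (B : Finset V) (w : V → V → ℝ≥0∞)
    (hsymm : ∀ u v, w u v = w v u)
    -- boundary vertices are exactly the vertices with a neighbor outside their partition
    (hB : ∀ v, v ∈ B ↔ ∃ u, part u ≠ part v ∧ w v u ≠ ⊤)
    (s t : V) (hij : part s ≠ part t) :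
    gdist w s t =
      ⨅ bp ∈ (B.filter fun b => part b = part s),
        ⨅ bq ∈ (B.filter fun b => part b = part t),
          gdist w s bp + gdist w bp bq + gdist w bq t := by
  have hB' : ∀ v u, part u ≠ part v → w v u ≠ ⊤ → v ∈ B := fun v u hu hw => (hB v).2 ⟨u, hu, hw⟩
  rw [gdist_eq_iInf_boundary_source w part B hB' hij]
  refine iInf_congr fun bp => iInf_congr fun hbp => ?_
  have hbpt : part bp ≠ part t := (Finset.mem_filter.1 hbp).2 ▸ hij
  rw [gdist_eq_iInf_boundary_target w part B hsymm hB' hbpt]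
  simp only [ENNReal.add_iInf, add_assoc]

/-- Correctness of the cross-partition query formula of the pre/post-boundary PSP index:
for non-boundary `s ∈ G_i` and `t ∈ G_j` with `i ≠ j`,
`d_G(s,t) = min over b_p ∈ B_i, b_q ∈ B_j of (d_G(s,b_p) + d_G(b_p,b_q) + d_G(b_q,t))`. -/
theorem cross_partition_query_correct
    {V : Type*} [Fintype V] [DecidableEq V] {k : ℕ}
    (part : V → Fin k) (B : Finset V) (w : V → V → ℝ≥0∞)
    (hsymm : ∀ u v, w u v = w v u)
    (hpos : ∀ u v, u ≠ v → 0 < w u v)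
    -- boundary vertices are exactly the vertices with a neighbor outside their partition
    (hB : ∀ v, v ∈ B ↔ ∃ u, part u ≠ part v ∧ w v u ≠ ⊤)
    (s t : V) (hij : part s ≠ part t) (hs : s ∉ B) (ht : t ∉ B) :
    gdist w s t =
      ⨅ bp ∈ (B.filter fun b => part b = part s),
        ⨅ bq ∈ (B.filter fun b => part b = part t),
          gdist w s bp + gdist w bp bq + gdist w bq t :=
  cross_partition_query_correct_general part B w hsymm hB s t hij
end
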